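/- arXiv:2406.18969 — 5 statements merged into one kernel-verified Lean document; each statement's English description precedes it below -/
import Mathlib

section
/- Let P ⊂ ℝ^n be an n-dimensional lattice polytope and c = (c_1,…,c_n) ∈ ℤ^n with P + c ⊂ [0,∞)^n. For i ∈ {1,…,n} define the rooftop polytope P(c;i) := {(u,h) ∈ ℝ^n × ℝ : u = (u_1,…,u_n) ∈ P + c, 0 ≤ h ≤ u_i}. Then for every positive integer k, the i-th coordinate of Bc_k(P) equals (#(k·P(c;i) ∩ ℤ^{n+1}) − #(kP ∩ ℤ^n)) / (k·#(kP ∩ ℤ^n)) − c_i. -/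
open scoped BigOperators
open MeasureTheory Polynomial Filter

noncomputable section

/-- A point of `ℝ^n` is a lattice point if all its coordinates are integers. -/
def isLatticePoint (n : ℕ) (u : Fin n → ℝ) : Prop := ∀ i, ∃ z : ℤ, u i = (z : ℝ)

/-- The set of lattice points of a subset `S ⊆ ℝ^n`. -/
def latticePts (n : ℕ) (S : Set (Fin n → ℝ)) : Set (Fin n → ℝ) :=
  {u ∈ S | isLatticePoint n u}

/-- The dilation `kS = {k • x : x ∈ S}`. -/
def dilate (n : ℕ) (k : ℕ) (S : Set (Fin n → ℝ)) : Set (Fin n → ℝ) :=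
  (fun x => (k : ℝ) • x) '' S

/-- A lattice polytope: the convex hull of a nonempty finite set of lattice points. -/
def IsLatticePolytope (n : ℕ) (P : Set (Fin n → ℝ)) : Prop :=
  ∃ V : Finset (Fin n → ℝ), V.Nonempty ∧ (∀ v ∈ V, isLatticePoint n v) ∧
    P = convexHull ℝ (V : Set (Fin n → ℝ))

/-- `P` is full-dimensional (`n`-dimensional) iff it has nonempty interior. -/
def IsFullDim (n : ℕ) (P : Set (Fin n → ℝ)) : Prop := (interior P).Nonempty

/-- The `k`-th quantized barycenter
`Bc_k(P) = (1/(k·#(kP ∩ ℤ^n))) · Σ_{u ∈ kP ∩ ℤ^n} u`. -/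
def Bck (n k : ℕ) (P : Set (Fin n → ℝ)) : Fin n → ℝ :=
  ((k : ℝ) * ((latticePts n (dilate n k P)).ncard : ℝ))⁻¹ •
    ∑ᶠ u ∈ latticePts n (dilate n k P), u

/-- The barycenter `Bc(P) = (∫_P x dx)/vol(P)`. -/
def Bc (n : ℕ) (P : Set (Fin n → ℝ)) : Fin n → ℝ :=
  fun i => (∫ x in P, x i) / (volume P).toReal

/-- The rooftop polytope over `P` with roof function `f`. -/
def rooftop (n : ℕ) (P : Set (Fin n → ℝ)) (f : (Fin n → ℝ) → ℝ) : Set (Fin (n+1) → ℝ) :=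
  {w | ∃ u ∈ P, ∃ h : ℝ, 0 ≤ h ∧ h ≤ f u ∧ w = Fin.snoc u h}

/-- The translate `P + c` of `P` by an integer vector `c`. -/
def translateBy (n : ℕ) (P : Set (Fin n → ℝ)) (c : Fin n → ℤ) : Set (Fin n → ℝ) :=
  (fun x => x + fun j => (c j : ℝ)) '' P

lemma smul_snoc (n : ℕ) (a : ℝ) (u : Fin n → ℝ) (h : ℝ) :
    a • (Fin.snoc u h : Fin (n+1) → ℝ) = (Fin.snoc (a • u) (a * h) : Fin (n+1) → ℝ) := by
  funext j
  refine Fin.lastCases ?_ (fun j => ?_) j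
  · simp [Fin.snoc_last]
  · simp [Fin.snoc_castSucc]

lemma finite_latticePts (n : ℕ) (S : Set (Fin n → ℝ)) (hS : Bornology.IsBounded S) :
    (latticePts n S).Finite := by
  obtain ⟨R, hR⟩ := hS.subset_closedBall 0
  have key : latticePts n S ⊆
      (fun z : Fin n → ℤ => fun j => (z j : ℝ)) ''
        (Set.pi Set.univ fun _ : Fin n => (Set.Icc (-⌈R⌉) ⌈R⌉ : Set ℤ)) := by
    rintro u ⟨huS, hlat⟩
    refine ⟨fun j => ⌊u j⌋, ?_, ?_⟩
    · intro j _
      obtain ⟨z, hz⟩ := hlat j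
      have hb : |u j| ≤ R := by
        have := hR huS
        rw [Metric.mem_closedBall] at this
        calc |u j| = dist (u j) ((0 : Fin n → ℝ) j) := by simp [Real.dist_eq]
          _ ≤ dist u (0 : Fin n → ℝ) := dist_le_pi_dist u 0 j
          _ ≤ R := this
      rw [hz] at hb
      have h1 : (z : ℝ) ≤ R := (abs_le.mp hb).2
      have h2 : -R ≤ (z : ℝ) := (abs_le.mp hb).1
      have hz1 : z ≤ ⌈R⌉ := by
        have := h1.trans (Int.le_ceil R)
        exact_mod_cast this
      have hz2 : -⌈R⌉ ≤ z := by
        have : (-⌈R⌉ : ℝ) ≤ (z : ℝ) := by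
          have h3 : -R ≥ -(⌈R⌉:ℝ) := by
            have := Int.le_ceil R
            linarith
          linarith
        exact_mod_cast this
      simp only [hz, Int.floor_intCast] at *
      simp only [Set.mem_Icc]
      exact ⟨hz2, hz1⟩
    · funext j
      obtain ⟨z, hz⟩ := hlat j
      simp [hz]
  exact Set.Finite.subset (Set.Finite.image _ (Set.Finite.pi fun _ => Set.finite_Icc _ _)) key

/-- formula for the `i`-th coordinate of the quantized barycenter via the
rooftop polytope `P(c;i) = {(u,h) : u ∈ P + c, 0 ≤ h ≤ u_i}`:
`Bc_{k,i}(P) = (#(kP(c;i) ∩ ℤ^{n+1}) − #(kP ∩ ℤ^n))/(k·#(kP ∩ ℤ^n)) − c_i`. -/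
theorem Bck_rooftop_formula
    (n : ℕ) (P : Set (Fin n → ℝ))
    (hP : IsLatticePolytope n P) (hdim : IsFullDim n P)
    (c : Fin n → ℤ) (hc : ∀ u ∈ P, ∀ j, 0 ≤ u j + (c j : ℝ))
    (i : Fin n) (k : ℕ) (hk : 0 < k) :
    Bck n k P i
      = (((latticePts (n+1)
            (dilate (n+1) k (rooftop n (translateBy n P c) (fun u => u i)))).ncard : ℝ)
          - ((latticePts n (dilate n k P)).ncard : ℝ))
        / ((k : ℝ) * ((latticePts n (dilate n k P)).ncard : ℝ)) - (c i : ℝ) := by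
  classical
  obtain ⟨V, hVne, hVlat, hPeq⟩ := hP
  have hk0 : (k : ℝ) ≠ 0 := Nat.cast_ne_zero.mpr hk.ne'
  have hkpos : (0 : ℝ) < k := Nat.cast_pos.mpr hk
  -- boundedness and finiteness
  have hPb : Bornology.IsBounded P := by
    rw [hPeq]; exact isBounded_convexHull.mpr V.finite_toSet.isBounded
  have hdb : Bornology.IsBounded (dilate n k P) := by
    rw [dilate, Set.image_smul]; exact hPb.smul₀ _
  have hLfin : (latticePts n (dilate n k P)).Finite := finite_latticePts _ _ hdb
  set T : Finset (Fin n → ℝ) := hLfin.toFinset with hT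
  have hTmem : ∀ u, u ∈ T ↔ u ∈ latticePts n (dilate n k P) := fun u => hLfin.mem_toFinset
  have hTne : T.Nonempty := by
    obtain ⟨v, hv⟩ := hVne
    refine ⟨(k:ℝ) • v, (hTmem _).mpr ⟨⟨v, ?_, rfl⟩, fun j => ?_⟩⟩
    · rw [hPeq]; exact subset_convexHull ℝ _ hv
    · obtain ⟨z, hz⟩ := hVlat v hv j
      exact ⟨k * z, by push_cast; simp [hz]⟩
  have hNcard : (latticePts n (dilate n k P)).ncard = T.card := by
    rw [hT, Set.ncard_eq_toFinset_card _ hLfin]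
  have hN0 : (0:ℝ) < T.card := by exact_mod_cast Finset.card_pos.mpr hTne
  -- facts about members of T
  have hmemD : ∀ u ∈ T, ∃ p ∈ P, (k:ℝ) • p = u := by
    intro u hu; exact ((hTmem u).mp hu).1
  have hlatT : ∀ u ∈ T, isLatticePoint n u := fun u hu => ((hTmem u).mp hu).2
  have hui_int : ∀ u ∈ T, (⌊u i⌋ : ℝ) = u i := by
    intro u hu; obtain ⟨z, hz⟩ := hlatT u hu i; rw [hz]; simp
  have hui_nonneg : ∀ u ∈ T, 0 ≤ u i + (k:ℝ) * c i := by
    intro u hu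
    obtain ⟨p, hp, hpu⟩ := hmemD u hu
    have := hc p hp i
    have : u i + (k:ℝ) * c i = k * (p i + c i) := by
      rw [← hpu]; simp [Pi.smul_apply, smul_eq_mul]; ring
    rw [this]
    exact mul_nonneg hkpos.le (hc p hp i)
  set m : (Fin n → ℝ) → ℕ := fun u => (⌊u i⌋ + k * c i).toNat with hmdef
  have hm : ∀ u ∈ T, (m u : ℝ) = u i + (k:ℝ) * c i := by
    intro u hu
    have hnn : (0:ℤ) ≤ ⌊u i⌋ + k * c i := by
      have : ((⌊u i⌋ + (k:ℤ) * c i : ℤ) : ℝ) = u i + (k:ℝ) * c i := by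
        push_cast; rw [hui_int u hu]
      have h2 := hui_nonneg u hu
      rw [← this] at h2
      exact_mod_cast h2
    have : ((m u : ℤ) : ℝ) = ((⌊u i⌋ + (k:ℤ) * c i : ℤ) : ℝ) := by
      rw [hmdef]; simp only []
      exact_mod_cast congrArg (Int.cast : ℤ → ℝ) (Int.toNat_of_nonneg hnn)
    rw [show ((m u : ℝ)) = ((m u : ℤ) : ℝ) by push_cast; ring, this]
    push_cast; rw [hui_int u hu]
  -- the columns
  set kcr : Fin n → ℝ := fun j => (k:ℝ) * c j with hkcr
  set g : (Fin n → ℝ) → Finset (Fin (n+1) → ℝ) := fun u =>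
    (Finset.range (m u + 1)).image
      (fun t : ℕ => (Fin.snoc (u + kcr) (t:ℝ) : Fin (n+1) → ℝ)) with hg
  have hgcard : ∀ u ∈ T, (g u).card = m u + 1 := by
    intro u hu
    rw [hg]; simp only []
    rw [Finset.card_image_of_injOn, Finset.card_range]
    intro a _ b _ hab
    have := congrFun hab (Fin.last n)
    simp only [Fin.snoc_last] at this
    exact_mod_cast this
  have hdisj : ∀ x ∈ T, ∀ y ∈ T, x ≠ y → Disjoint (g x) (g y) := by
    intro x hx y hy hxy
    rw [Finset.disjoint_left]
    intro w hwx hwy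
    rw [hg] at hwx hwy
    simp only [Finset.mem_image, Finset.mem_range] at hwx hwy
    obtain ⟨a, _, ha⟩ := hwx
    obtain ⟨b, _, hb⟩ := hwy
    apply hxy
    have : x + kcr = y + kcr := by
      have h1 := congrArg Fin.init ha
      have h2 := congrArg Fin.init hb
      rw [Fin.init_snoc] at h1 h2
      rw [h1, h2]
    funext j
    have := congrFun this j
    simpa using this
  -- the set identification
  have hset : latticePts (n+1)
      (dilate (n+1) k (rooftop n (translateBy n P c) (fun u => u i)))
      = ↑(T.biUnion g) := by
    ext w
    constructor
    · rintro ⟨⟨x, hx, rfl⟩, hlat⟩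
      obtain ⟨u, hu, h, h0, hhi, rfl⟩ := hx
      obtain ⟨p, hp, rfl⟩ := hu
      dsimp only at hlat ⊢
      have hweq : (k:ℝ) • (Fin.snoc (p + fun j => ((c j : ℤ) : ℝ)) h : Fin (n+1) → ℝ)
          = (Fin.snoc ((k:ℝ) • p + kcr) ((k:ℝ)*h) : Fin (n+1) → ℝ) := by
        rw [smul_snoc]
        funext j
        refine Fin.lastCases ?_ (fun j => ?_) j
        · simp [Fin.snoc_last]
        · simp [Fin.snoc_castSucc, hkcr, smul_add, mul_add]
      rw [hweq] at hlat ⊢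
      set v : Fin n → ℝ := (k:ℝ) • p with hv
      have hvT : v ∈ T := by
        refine (hTmem v).mpr ⟨⟨p, hp, rfl⟩, fun j => ?_⟩
        obtain ⟨z, hz⟩ := hlat (Fin.castSucc j)
        rw [Fin.snoc_castSucc] at hz
        refine ⟨z - k * c j, ?_⟩
        have h2 : v j + (k:ℝ) * c j = (z:ℝ) := by simpa [hkcr] using hz
        push_cast
        linarith
      obtain ⟨zh, hzh⟩ := hlat (Fin.last n)
      rw [Fin.snoc_last] at hzh
      have hzh0 : (0:ℤ) ≤ zh := by
        have : (0:ℝ) ≤ (zh:ℝ) := by rw [← hzh]; positivity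
        exact_mod_cast this
      set t : ℕ := zh.toNat with htdef
      have htr : (t:ℝ) = (k:ℝ) * h := by
        rw [hzh]
        exact_mod_cast congrArg (Int.cast : ℤ → ℝ) (Int.toNat_of_nonneg hzh0)
      have ht : t ∈ Finset.range (m v + 1) := by
        rw [Finset.mem_range, Nat.lt_succ_iff]
        have hle : (t:ℝ) ≤ (m v : ℝ) := by
          rw [htr, hm v hvT]
          have hhi' : h ≤ p i + c i := by simpa using hhi
          have hvi : v i = (k:ℝ) * p i := by simp [hv]
          rw [hvi]
          nlinarith
        exact_mod_cast hle
      refine Finset.mem_coe.mpr (Finset.mem_biUnion.mpr ⟨v, hvT, ?_⟩)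
      rw [hg]
      simp only [Finset.mem_image]
      exact ⟨t, ht, by rw [htr]⟩
    · intro hw
      obtain ⟨u, huT, hwg⟩ := Finset.mem_biUnion.mp (Finset.mem_coe.mp hw)
      rw [hg] at hwg
      simp only [Finset.mem_image, Finset.mem_range, Nat.lt_succ_iff] at hwg
      obtain ⟨t, ht, rfl⟩ := hwg
      obtain ⟨p, hp, hpu⟩ := hmemD u huT
      constructor
      · refine ⟨(Fin.snoc (p + fun j => ((c j : ℤ) : ℝ)) ((t:ℝ)/k) : Fin (n+1) → ℝ),
          ⟨p + fun j => ((c j : ℤ) : ℝ), ⟨p, hp, rfl⟩, (t:ℝ)/k, by positivity, ?_, rfl⟩, ?_⟩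
        · have htm : (t:ℝ) ≤ (m u : ℝ) := by exact_mod_cast ht
          rw [hm u huT] at htm
          have hui : u i = (k:ℝ) * p i := by rw [← hpu]; simp
          show (t:ℝ)/k ≤ p i + c i
          rw [div_le_iff₀ hkpos]
          rw [hui] at htm
          nlinarith
        · dsimp only
          rw [smul_snoc]
          funext j
          refine Fin.lastCases ?_ (fun j => ?_) j
          · simp only [Fin.snoc_last]
            field_simp
          · simp only [Fin.snoc_castSucc, Pi.add_apply, Pi.smul_apply, smul_eq_mul]
            rw [← hpu]
            simp [hkcr, mul_add]
      · intro j
        refine Fin.lastCases ?_ (fun j => ?_) j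
        · exact ⟨t, by simp [Fin.snoc_last]⟩
        · obtain ⟨z, hz⟩ := hlatT u huT j
          refine ⟨z + k * c j, ?_⟩
          rw [Fin.snoc_castSucc]
          show u j + kcr j = _
          rw [hkcr, hz]
          push_cast
          ring
  -- counting
  have hRcard : (latticePts (n+1)
      (dilate (n+1) k (rooftop n (translateBy n P c) (fun u => u i)))).ncard
      = ∑ u ∈ T, (m u + 1) := by
    rw [hset, Set.ncard_coe_finset, Finset.card_biUnion hdisj]
    exact Finset.sum_congr rfl hgcard
  have hRsum : ((∑ u ∈ T, (m u + 1) : ℕ) : ℝ)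
      = (∑ u ∈ T, u i) + (T.card : ℝ) * ((k:ℝ) * c i + 1) := by
    push_cast
    rw [Finset.sum_add_distrib, Finset.sum_const, nsmul_eq_mul]
    have : ∑ u ∈ T, (m u : ℝ) = ∑ u ∈ T, (u i + (k:ℝ) * c i) := by
      exact Finset.sum_congr rfl hm
    rw [this, Finset.sum_add_distrib, Finset.sum_const, nsmul_eq_mul]
    ring
  -- the left-hand side
  have hL : latticePts n (dilate n k P) = ↑T := hLfin.coe_toFinset.symm
  have hsum : (∑ᶠ u ∈ latticePts n (dilate n k P), u) = ∑ u ∈ T, u := by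
    rw [hL, finsum_mem_coe_finset]
  rw [Bck, hsum, hNcard, hRcard]
  rw [Pi.smul_apply, smul_eq_mul, Finset.sum_apply]
  rw [hRsum]
  have hTc : (T.card : ℝ) ≠ 0 := hN0.ne'
  field_simp
  ring
end
end

section
/- Let P ⊂ ℝ^n be an n-dimensional lattice polytope. For each i ∈ {1,…,n} fix C_i ∈ ℤ with u_i + C_i ≥ 0 on P and set P_i := {(u,h) ∈ ℝ^n × ℝ : u ∈ P, 0 ≤ h ≤ u_i + C_i}. Suppose there are polynomials E and E_1,…,E_n with deg E ≤ n, deg E_i ≤ n+1, E(0) = E_i(0) = 1, E(k) = #(kP ∩ ℤ^n) and E_i(k) = #(kP_i ∩ ℤ^{n+1}) for all positive integers k. If there exist n+1 distinct positive integers k_0 < k_1 < … < k_n and a vector λ ∈ ℝ^n such that Bc_{k_j}(P) = λ for all j = 0,…,n, then Bc_k(P) = λ for every positive integer k, and λ = Bc(P). -/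
open scoped BigOperators
open MeasureTheory Polynomial Filter

noncomputable section

/-!
Slicing `kPᵢ` along the last coordinate over the lattice points `u` of `kP` gives
`#(kPᵢ ∩ ℤⁿ⁺¹) = Σᵤ uᵢ + (k Cᵢ + 1) · #(kP ∩ ℤⁿ)`. Hence `Bc_k(P)ᵢ = λᵢ` says exactly that the
polynomial `Eᵢ - (1 + (Cᵢ + λᵢ) X) E`, of degree at most `n + 1`, vanishes at `k`; it also
vanishes at `0`, so `n + 2` roots force it to be zero and `Bc_k(P) = λ` for every `k`. Finally
`Bc_k(P)` is a ratio of Riemann sums, so it tends to `Bc(P)`, the boundary of a convex body being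
Lebesgue-null.
-/

open Bornology Pointwise Submodule

section

variable {n : ℕ}

theorem isLatticePoint_iff_mem_span {x : Fin n → ℝ} :
    isLatticePoint n x ↔ x ∈ span ℤ (Set.range (Pi.basisFun ℝ (Fin n))) := by
  simp [isLatticePoint, Module.Basis.mem_span_iff_repr_mem, eq_comm]

theorem latticePts_eq_inter (S : Set (Fin n → ℝ)) :
    latticePts n S = S ∩ span ℤ (Set.range (Pi.basisFun ℝ (Fin n))) := by
  ext x
  exact and_congr_right' isLatticePoint_iff_mem_span

theorem dilate_eq_smul (k : ℕ) (S : Set (Fin n → ℝ)) : dilate n k S = (k : ℝ) • S :=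
  Set.image_smul

theorem latticePts_dilate_finite {S : Set (Fin n → ℝ)} (hS : IsBounded S) (k : ℕ) :
    (latticePts n (dilate n k S)).Finite := by
  rw [latticePts_eq_inter, dilate_eq_smul]
  exact ZSpan.setFinite_inter _ (hS.smul₀ _)

theorem latticePts_dilate {k : ℕ} (hk : k ≠ 0) (S : Set (Fin n → ℝ)) :
    latticePts n (dilate n k S)
      = (k : ℝ) • (S ∩ (k : ℝ)⁻¹ • (span ℤ (Set.range (Pi.basisFun ℝ (Fin n))) : Set _)) := by
  have hk' : (k : ℝ) ≠ 0 := Nat.cast_ne_zero.mpr hk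
  rw [latticePts_eq_inter, dilate_eq_smul, Set.smul_set_inter₀ hk', smul_inv_smul₀ hk']

theorem isLatticePoint_snoc {u : Fin n → ℝ} {h : ℝ} :
    isLatticePoint (n + 1) (Fin.snoc u h) ↔ isLatticePoint n u ∧ ∃ z : ℤ, h = z := by
  simp [isLatticePoint, Fin.forall_fin_succ']

theorem mem_latticePts_rooftop {S : Set (Fin n → ℝ)} {g : (Fin n → ℝ) → ℝ}
    (hg : ∀ u ∈ latticePts n S, 0 ≤ g u) {w : Fin (n + 1) → ℝ} :
    w ∈ latticePts (n + 1) (rooftop n S g) ↔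
      ∃ u ∈ latticePts n S, ∃ m : ℕ, m ≤ ⌊g u⌋₊ ∧ Fin.snoc u (m : ℝ) = w := by
  constructor
  · rintro ⟨⟨u, hu, h, h0, hle, rfl⟩, hlat⟩
    obtain ⟨hu_lat, z, rfl⟩ := isLatticePoint_snoc.mp hlat
    lift z to ℕ using (by exact_mod_cast h0)
    exact ⟨u, ⟨hu, hu_lat⟩, z, Nat.le_floor (by exact_mod_cast hle), rfl⟩
  · rintro ⟨u, hu, m, hm, rfl⟩
    refine ⟨⟨u, hu.1, m, m.cast_nonneg, ?_, rfl⟩, isLatticePoint_snoc.mpr ⟨hu.2, m, rfl⟩⟩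
    exact (Nat.cast_le.mpr hm).trans (Nat.floor_le (hg u hu))

theorem ncard_latticePts_rooftop {S : Set (Fin n → ℝ)} {g : (Fin n → ℝ) → ℝ}
    (hS : (latticePts n S).Finite) (hg : ∀ u ∈ latticePts n S, 0 ≤ g u) :
    (latticePts (n + 1) (rooftop n S g)).ncard = ∑ u ∈ hS.toFinset, (⌊g u⌋₊ + 1) := by
  classical
  let snoc : (_ : Fin n → ℝ) × ℕ → (Fin (n + 1) → ℝ) := fun p => Fin.snoc p.1 (p.2 : ℝ)
  have hsnoc : Function.Injective snoc := by
    rintro ⟨u, m⟩ ⟨u', m'⟩ h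
    obtain ⟨rfl, hm⟩ := Fin.snoc_injective2 h
    simp_all
  have himage : latticePts (n + 1) (rooftop n S g) =
      ((hS.toFinset.sigma fun u => Finset.range (⌊g u⌋₊ + 1)).image snoc : Set _) := by
    ext w
    simp [snoc, mem_latticePts_rooftop hg, and_assoc]
  rw [himage, Set.ncard_coe_finset, Finset.card_image_of_injective _ hsnoc, Finset.card_sigma]
  simp

theorem dilate_rooftop {k : ℕ} (hk : k ≠ 0) (S : Set (Fin n → ℝ)) (f : (Fin n → ℝ) → ℝ) :
    dilate (n + 1) k (rooftop n S f)
      = rooftop n (dilate n k S) fun u => k * f ((k : ℝ)⁻¹ • u) := by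
  have hk' : (k : ℝ) ≠ 0 := Nat.cast_ne_zero.mpr hk
  ext w
  constructor
  · rintro ⟨_, ⟨u, hu, h, h0, hle, rfl⟩, rfl⟩
    refine ⟨(k : ℝ) • u, ⟨u, hu, rfl⟩, k * h, by positivity, ?_, ?_⟩
    · simp only [inv_smul_smul₀ hk']
      exact mul_le_mul_of_nonneg_left hle (Nat.cast_nonneg k)
    · ext j
      refine Fin.lastCases ?_ (fun j => ?_) j <;> simp
  · rintro ⟨_, ⟨u, hu, rfl⟩, h, h0, hle, rfl⟩
    refine ⟨Fin.snoc u ((k : ℝ)⁻¹ * h), ⟨u, hu, _, by positivity, ?_, rfl⟩, ?_⟩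
    · simp only [inv_smul_smul₀ hk'] at hle
      rwa [inv_mul_le_iff₀ (by positivity)]
    · ext j
      refine Fin.lastCases ?_ (fun j => ?_) j <;> simp [hk']

theorem ncard_latticePts_dilate_rooftop {P : Set (Fin n → ℝ)} {k : ℕ} (hk : k ≠ 0)
    (hP : (latticePts n (dilate n k P)).Finite) (i : Fin n) (c : ℤ)
    (hc : ∀ u ∈ P, 0 ≤ u i + c) :
    ((latticePts (n + 1) (dilate (n + 1) k (rooftop n P fun u => u i + c))).ncard : ℝ)
      = ∑ᶠ u ∈ latticePts n (dilate n k P), u i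
        + (k * c + 1) * (latticePts n (dilate n k P)).ncard := by
  have hk' : (k : ℝ) ≠ 0 := Nat.cast_ne_zero.mpr hk
  have hroof : ∀ u : Fin n → ℝ, (k : ℝ) * (((k : ℝ)⁻¹ • u) i + c) = u i + k * c := by
    intro u
    simp [mul_add, hk']
  have hnonneg : ∀ u ∈ latticePts n (dilate n k P), 0 ≤ u i + k * c := by
    rintro _ ⟨⟨v, hv, rfl⟩, -⟩
    have := mul_nonneg (Nat.cast_nonneg k) (hc v hv)
    simpa [mul_add] using this
  have hfloor : ∀ u ∈ hP.toFinset, ((⌊u i + k * c⌋₊ + 1 : ℕ) : ℝ) = u i + (k * c + 1) := by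
    intro u hu
    rw [Set.Finite.mem_toFinset] at hu
    obtain ⟨z, hz⟩ := hu.2 i
    have hint : u i + k * c = ((z + k * c : ℤ) : ℝ) := by push_cast; rw [hz]
    have hnn : (0 : ℝ) ≤ ((z + k * c : ℤ) : ℝ) := hint ▸ hnonneg u hu
    rw [← add_assoc, hint]
    lift z + k * c to ℕ using (by exact_mod_cast hnn) with m
    push_cast
    rw [Nat.floor_natCast]
  simp only [dilate_rooftop hk, hroof]
  rw [ncard_latticePts_rooftop hP hnonneg, Nat.cast_sum, Finset.sum_congr rfl hfloor,
    Finset.sum_add_distrib, Finset.sum_const, nsmul_eq_mul, finsum_mem_eq_finite_toFinset_sum _ hP,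
    Set.ncard_eq_toFinset_card _ hP]
  ring

theorem forall_eq_mul_of_polynomial_counts {E F : ℝ[X]} {a s : ℕ → ℝ} {c lam : ℝ}
    (hEdeg : E.natDegree ≤ n) (hFdeg : F.natDegree ≤ n + 1)
    (hE0 : E.eval 0 = 1) (hF0 : F.eval 0 = 1)
    (hE : ∀ k : ℕ, 0 < k → E.eval (k : ℝ) = a k)
    (hF : ∀ k : ℕ, 0 < k → F.eval (k : ℝ) = s k + (k * c + 1) * a k)
    {ks : Fin (n + 1) → ℕ} (hks : Function.Injective ks) (hks0 : ∀ j, 0 < ks j)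
    (hlam : ∀ j, s (ks j) = lam * ks j * a (ks j)) :
    ∀ k : ℕ, 0 < k → s k = lam * k * a k := by
  -- `F - G` has degree at most `n + 1` and vanishes at `0` and at the `n + 1` points `ks j`.
  set G : ℝ[X] := (C (c + lam) * X + C 1) * E
  have hG : ∀ k : ℕ, 0 < k → G.eval (k : ℝ) = ((c + lam) * k + 1) * a k := by
    intro k hk
    simp [G, hE k hk]
  suffices hFG : F = G by
    intro k hk
    have := hF k hk
    rw [hFG, hG k hk] at this
    linarith
  let pts : Finset ℝ := insert 0 (Finset.univ.image fun j => (ks j : ℝ))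
  have hcard : pts.card = n + 2 := by
    rw [Finset.card_insert_of_notMem,
      Finset.card_image_of_injective _ fun _ _ h => hks (Nat.cast_injective h),
      Finset.card_univ, Fintype.card_fin]
    simp only [Finset.mem_image, Finset.mem_univ, true_and, not_exists]
    exact fun j => Nat.cast_ne_zero.mpr (hks0 j).ne'
  refine eq_of_degree_sub_lt_of_eval_finset_eq pts ?_ ?_
  · rw [hcard]
    refine (degree_le_of_natDegree_le ((natDegree_sub_le _ _).trans (max_le hFdeg ?_))).trans_lt
      (by exact_mod_cast Nat.lt_succ_self _)
    exact natDegree_mul_le.trans (by linarith [natDegree_linear_le (a := c + lam) (b := (1 : ℝ))])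
  · simp only [pts, Finset.mem_insert, Finset.mem_image, Finset.mem_univ, true_and]
    rintro x (rfl | ⟨j, rfl⟩)
    · simp [G, hE0, hF0]
    · rw [hF _ (hks0 j), hG _ (hks0 j), hlam j]
      ring

theorem Bck_apply {k : ℕ} {P : Set (Fin n → ℝ)} (hP : (latticePts n (dilate n k P)).Finite)
    (i : Fin n) :
    Bck n k P i = ((k : ℝ) * (latticePts n (dilate n k P)).ncard)⁻¹
      * ∑ᶠ u ∈ latticePts n (dilate n k P), u i := by
  simp [Bck, finsum_mem_eq_finite_toFinset_sum _ hP, Finset.sum_apply]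

theorem Bck_apply_eq_iff {k : ℕ} (hk : k ≠ 0) {P : Set (Fin n → ℝ)}
    (hP : (latticePts n (dilate n k P)).Finite) (hne : (latticePts n (dilate n k P)).Nonempty)
    (i : Fin n) (l : ℝ) :
    Bck n k P i = l ↔
      ∑ᶠ u ∈ latticePts n (dilate n k P), u i = l * k * (latticePts n (dilate n k P)).ncard := by
  have hcard : ((latticePts n (dilate n k P)).ncard : ℝ) ≠ 0 :=
    Nat.cast_ne_zero.mpr (Set.ncard_pos hP |>.mpr hne).ne'
  rw [Bck_apply hP, inv_mul_eq_iff_eq_mul₀ (mul_ne_zero (Nat.cast_ne_zero.mpr hk) hcard)]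
  ring_nf

theorem Bck_apply_eq_tsum_div {P : Set (Fin n → ℝ)} (hP : IsBounded P) {k : ℕ} (hk : k ≠ 0)
    (i : Fin n) :
    Bck n k P i
      = (∑' x : ↑(P ∩ (k : ℝ)⁻¹ • span ℤ (Set.range (Pi.basisFun ℝ (Fin n)))), (x : Fin n → ℝ) i)
        / Nat.card ↑(P ∩ (k : ℝ)⁻¹ • span ℤ (Set.range (Pi.basisFun ℝ (Fin n)))) := by
  have hk' : (k : ℝ) ≠ 0 := Nat.cast_ne_zero.mpr hk
  set B := P ∩ ((k : ℝ)⁻¹ • span ℤ (Set.range (Pi.basisFun ℝ (Fin n))) : Set (Fin n → ℝ))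
  have hinj : Set.InjOn (fun x : Fin n → ℝ => (k : ℝ) • x) B := (smul_right_injective _ hk').injOn
  have hA : latticePts n (dilate n k P) = (fun x => (k : ℝ) • x) '' B := by
    rw [latticePts_dilate hk, Set.image_smul]
  have hB : B.Finite := Set.Finite.of_finite_image (hA ▸ latticePts_dilate_finite hP k) hinj
  rw [Bck_apply (latticePts_dilate_finite hP k), hA, finsum_mem_image hinj,
    Set.ncard_image_of_injective _ (smul_right_injective _ hk'), Nat.card_coe_set_eq,
    ← hB.coe_toFinset, Finset.tsum_subtype' _ fun x : Fin n → ℝ => x i, finsum_mem_coe_finset]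
  simp only [Pi.smul_apply, smul_eq_mul, ← Finset.mul_sum]
  field_simp

theorem tendsto_Bck {P : Set (Fin n → ℝ)} (hb : IsBounded P) (hm : MeasurableSet P)
    (hfr : volume (frontier P) = 0) (hvol : volume P ≠ 0) :
    Tendsto (fun k : ℕ => Bck n k P) atTop (nhds (Bc n P)) := by
  rw [tendsto_pi_nhds]
  intro i
  have hsum := tendsto_tsum_div_pow_atTop_integral P (fun x => x i) (continuous_apply i) hb hm hfr
  have hcard := tendsto_card_div_pow_atTop_volume P hb hm hfr
  have hvol' : volume.real P ≠ 0 := ENNReal.toReal_ne_zero.mpr ⟨hvol, hb.measure_lt_top.ne⟩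
  refine (hsum.div hcard hvol').congr' ?_
  filter_upwards [eventually_ne_atTop 0] with k hk
  rw [Pi.div_apply, Bck_apply_eq_tsum_div hb hk, div_div_div_cancel_right₀ (by positivity)]

theorem IsFullDim.volume_ne_zero {P : Set (Fin n → ℝ)} (hP : IsFullDim n P) : volume P ≠ 0 :=
  ((isOpen_interior.measure_pos volume hP).trans_le (measure_mono interior_subset)).ne'

namespace IsLatticePolytope

variable {P : Set (Fin n → ℝ)}

theorem convex (hP : IsLatticePolytope n P) : Convex ℝ P := by
  obtain ⟨V, -, -, rfl⟩ := hP
  exact convex_convexHull ℝ _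

theorem isCompact (hP : IsLatticePolytope n P) : IsCompact P := by
  obtain ⟨V, -, -, rfl⟩ := hP
  exact V.finite_toSet.isCompact_convexHull (𝕜 := ℝ)

theorem latticePts_dilate_nonempty (hP : IsLatticePolytope n P) (k : ℕ) :
    (latticePts n (dilate n k P)).Nonempty := by
  obtain ⟨V, ⟨v, hv⟩, hV, rfl⟩ := hP
  refine ⟨(k : ℝ) • v, ⟨v, subset_convexHull ℝ _ hv, rfl⟩, fun i => ?_⟩
  obtain ⟨z, hz⟩ := hV v hv i
  exact ⟨k * z, by simp [hz]⟩

end IsLatticePolytope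

end

/-- if the quantized barycenter takes the same value `λ` at `n+1` distinct
positive integers, then it equals `λ` at every positive integer, and `λ = Bc(P)`. -/
theorem Bck_constant_implies_Bc
    (n : ℕ) (P : Set (Fin n → ℝ))
    (hP : IsLatticePolytope n P) (hdim : IsFullDim n P)
    (C : Fin n → ℤ) (hC : ∀ i : Fin n, ∀ u ∈ P, 0 ≤ u i + (C i : ℝ))
    (E : Polynomial ℝ) (Ei : Fin n → Polynomial ℝ)
    (hEdeg : E.natDegree ≤ n) (hEideg : ∀ i, (Ei i).natDegree ≤ n + 1)
    (hE0 : E.eval 0 = 1) (hEi0 : ∀ i, (Ei i).eval 0 = 1)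
    (hE : ∀ k : ℕ, 0 < k → E.eval (k : ℝ) = ((latticePts n (dilate n k P)).ncard : ℝ))
    (hEi : ∀ i : Fin n, ∀ k : ℕ, 0 < k →
      (Ei i).eval (k : ℝ)
        = ((latticePts (n+1)
            (dilate (n+1) k (rooftop n P (fun u => u i + (C i : ℝ))))).ncard : ℝ))
    (ks : Fin (n+1) → ℕ) (hks : StrictMono ks) (hks0 : 0 < ks 0)
    (lam : Fin n → ℝ) (hlam : ∀ j : Fin (n+1), Bck n (ks j) P = lam) :
    (∀ k : ℕ, 0 < k → Bck n k P = lam) ∧ lam = Bc n P := by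
  have hbdd := hP.isCompact.isBounded
  have hfin := latticePts_dilate_finite hbdd
  have hne := hP.latticePts_dilate_nonempty
  have hks_pos : ∀ j, 0 < ks j := fun j => hks0.trans_le (hks.monotone (Fin.zero_le j))
  have hconst : ∀ k : ℕ, 0 < k → Bck n k P = lam := by
    intro k hk
    funext i
    rw [Bck_apply_eq_iff hk.ne' (hfin k) (hne k)]
    refine forall_eq_mul_of_polynomial_counts (c := C i)
      (s := fun k => ∑ᶠ u ∈ latticePts n (dilate n k P), u i)
      hEdeg (hEideg i) hE0 (hEi0 i) hE (fun k hk => ?_) hks.injective hks_pos (fun j => ?_) k hk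
    · rw [hEi i k hk, ncard_latticePts_dilate_rooftop hk.ne' (hfin k) i (C i) (hC i)]
    · exact (Bck_apply_eq_iff (hks_pos j).ne' (hfin _) (hne _) i (lam i)).mp (congrFun (hlam j) i)
  refine ⟨hconst, tendsto_nhds_unique ?_ (tendsto_Bck hbdd hP.isCompact.isClosed.measurableSet
    (hP.convex.addHaar_frontier volume) hdim.volume_ne_zero)⟩
  exact tendsto_const_nhds.congr' (eventually_atTop.mpr ⟨1, fun k hk => (hconst k hk).symm⟩)
end
end

section
/- Let P ⊂ ℝ^n be a reflexive lattice polytope, say P = ⋂_{i=1}^d {u ∈ ℝ^n : ⟨u, v_i⟩ ≥ −1} with v_1,…,v_d ∈ ℤ^n primitive. Then for every positive integer k, int(kP) ∩ ℤ^n = (k−1)P ∩ ℤ^n, where int denotes the topological interior and 0·P := {0}. -/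
open scoped BigOperators
open MeasureTheory Polynomial Filter

noncomputable section

/-- `P` is reflexive w.r.t. the primitive integer vectors `v 1, …, v d`:
each `v i` has coordinates with gcd `1`, and
`P = ⋂ i {u : ⟨u, v i⟩ ≥ −1}`. -/
def IsReflexive (n d : ℕ) (v : Fin d → Fin n → ℤ) (P : Set (Fin n → ℝ)) : Prop :=
  (∀ i, Finset.univ.gcd (v i) = 1) ∧
    P = ⋂ i, {u : Fin n → ℝ | -1 ≤ ∑ j, u j * (v i j : ℝ)}

/-- Interior of a closed halfspace with nonzero normal vector. -/
lemma aux_interior_halfspace {n : ℕ} (c : Fin n → ℝ) (a : ℝ) (hc : ∃ j, c j ≠ 0) :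
    interior {u : Fin n → ℝ | a ≤ ∑ j, u j * c j} = {u | a < ∑ j, u j * c j} := by
  obtain ⟨j0, hj0⟩ := hc
  have hcont : Continuous fun u : Fin n → ℝ => ∑ j, u j * c j :=
    continuous_finset_sum _ fun j _ => (continuous_apply j).mul continuous_const
  apply subset_antisymm
  · intro u hu
    have hmem : a ≤ ∑ j, u j * c j := by
      have := interior_subset hu
      simpa [Set.mem_setOf_eq] using this
    rcases lt_or_eq_of_le hmem with h | h
    · exact h
    exfalso
    obtain ⟨ε, hε, hball⟩ := Metric.isOpen_iff.1 isOpen_interior u hu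
    set w : Fin n → ℝ := fun j => if j = j0 then c j0 else 0 with hw
    set δ : ℝ := ε / (2 * (‖w‖ + 1)) with hδ
    have hwn : (0:ℝ) ≤ ‖w‖ := norm_nonneg w
    have hδpos : 0 < δ := by positivity
    have hu' : u - δ • w ∈ interior {u : Fin n → ℝ | a ≤ ∑ j, u j * c j} := by
      apply hball
      rw [Metric.mem_ball, dist_eq_norm, show u - δ • w - u = -(δ • w) by abel, norm_neg,
        norm_smul, Real.norm_eq_abs, abs_of_nonneg (le_of_lt hδpos)]
      rw [hδ, div_mul_eq_mul_div]
      rw [div_lt_iff₀ (by positivity)]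
      nlinarith
    have hle : a ≤ ∑ j, (u - δ • w) j * c j := by
      have := interior_subset hu'
      simpa [Set.mem_setOf_eq] using this
    have hwsum : ∑ j, w j * c j = c j0 * c j0 := by
      rw [hw]
      simp [ite_mul]
    have hsum : ∑ j, (u - δ • w) j * c j = (∑ j, u j * c j) - δ * (c j0 * c j0) := by
      rw [← hwsum, Finset.mul_sum, ← Finset.sum_sub_distrib]
      refine Finset.sum_congr rfl fun j _ => ?_
      simp [sub_mul, mul_assoc]
    rw [hsum, ← h] at hle
    have hcc : 0 < c j0 * c j0 := mul_self_pos.2 hj0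
    nlinarith
  · refine interior_maximal (fun u hu => ?_) (isOpen_lt continuous_const hcont)
    have hu' : a < ∑ j, u j * c j := hu
    exact le_of_lt hu'

/-- for a reflexive lattice polytope,
`int(kP) ∩ ℤ^n = (k−1)P ∩ ℤ^n` for every positive integer `k`
(with `0·P = {0}`, which is what `dilate n 0 P` is since `P` is nonempty). -/
theorem reflexive_interior_lattice_points
    (n d : ℕ) (v : Fin d → Fin n → ℤ) (P : Set (Fin n → ℝ))
    (hP : IsLatticePolytope n P) (hdim : IsFullDim n P)
    (href : IsReflexive n d v P)
    (k : ℕ) (hk : 0 < k) :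
    latticePts n (interior (dilate n k P)) = latticePts n (dilate n (k - 1) P) := by
  obtain ⟨hgcd, hPeq⟩ := href
  obtain ⟨V, hVne, hVlat, hPV⟩ := hP
  obtain ⟨k', rfl⟩ : ∃ k', k = k' + 1 := ⟨k - 1, (Nat.succ_pred_eq_of_pos hk).symm⟩
  have hkm : k' + 1 - 1 = k' := by omega
  rw [hkm]
  -- P is bounded and nonempty
  have hbdd : Bornology.IsBounded P := by
    rw [hPV]; exact isBounded_convexHull.2 V.finite_toSet.isBounded
  obtain ⟨C, hC⟩ := isBounded_iff_forall_norm_le.1 hbdd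
  have hne : P.Nonempty := by
    obtain ⟨x, hx⟩ := hVne
    exact ⟨x, hPV ▸ subset_convexHull ℝ _ hx⟩
  -- each normal vector is nonzero
  have hv : ∀ i, ∃ j, (v i j : ℝ) ≠ 0 := by
    intro i
    by_contra h
    push_neg at h
    have h0 : Finset.univ.gcd (v i) = 0 :=
      Finset.gcd_eq_zero_iff.2 fun j _ => by exact_mod_cast h j
    rw [hgcd i] at h0
    exact one_ne_zero h0
  -- the recession cone is trivial
  have hcone : ∀ u : Fin n → ℝ, (∀ i, (0:ℝ) ≤ ∑ j, u j * (v i j : ℝ)) → u = 0 := by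
    intro u hu
    by_contra h0
    have hun : 0 < ‖u‖ := norm_pos_iff.2 h0
    obtain ⟨p, hp⟩ := hne
    have hCp : 0 ≤ C := le_trans (norm_nonneg p) (hC p hp)
    set t : ℝ := (C + ‖p‖ + 1) / ‖u‖ with ht
    have htpos : 0 < t := by positivity
    have hmem : p + t • u ∈ P := by
      rw [hPeq]; rw [hPeq] at hp
      simp only [Set.mem_iInter, Set.mem_setOf_eq] at hp ⊢
      intro i
      have hsum : ∑ j, (p + t • u) j * (v i j : ℝ)
          = (∑ j, p j * (v i j : ℝ)) + t * ∑ j, u j * (v i j : ℝ) := by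
        rw [Finset.mul_sum, ← Finset.sum_add_distrib]
        refine Finset.sum_congr rfl fun j _ => ?_
        simp [add_mul, mul_assoc]
      rw [hsum]
      have h1 := hp i
      have h2 := mul_nonneg (le_of_lt htpos) (hu i)
      linarith
    have hnorm := hC _ hmem
    have h1 := norm_sub_le (p + t • u) p
    rw [add_sub_cancel_left] at h1
    have h2 : ‖t • u‖ = C + ‖p‖ + 1 := by
      rw [norm_smul, Real.norm_eq_abs, abs_of_nonneg (le_of_lt htpos), ht,
        div_mul_cancel₀ _ (ne_of_gt hun)]
    linarith
  -- dilation formula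
  have hdil : ∀ m : ℕ, dilate n m P
      = ⋂ i, {u : Fin n → ℝ | -(m:ℝ) ≤ ∑ j, u j * (v i j : ℝ)} := by
    intro m
    rcases Nat.eq_zero_or_pos m with rfl | hm
    · have h1 : dilate n 0 P = {0} := by
        unfold dilate
        simp only [Nat.cast_zero, zero_smul]
        exact Set.Nonempty.image_const hne 0
      rw [h1]
      ext u
      simp only [Set.mem_singleton_iff, Set.mem_iInter, Set.mem_setOf_eq, Nat.cast_zero, neg_zero]
      constructor
      · rintro rfl i
        simp
      · intro h
        exact hcone u h
    · have hm' : (0:ℝ) < (m:ℝ) := by exact_mod_cast hm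
      ext u
      constructor
      · rintro ⟨x, hx, rfl⟩
        rw [hPeq] at hx
        simp only [Set.mem_iInter, Set.mem_setOf_eq] at hx ⊢
        intro i
        have hsum : ∑ j, ((m:ℝ) • x) j * (v i j : ℝ) = (m:ℝ) * ∑ j, x j * (v i j : ℝ) := by
          rw [Finset.mul_sum]
          refine Finset.sum_congr rfl fun j _ => ?_
          simp [mul_assoc]
        rw [hsum]
        have := mul_le_mul_of_nonneg_left (hx i) (le_of_lt hm')
        linarith
      · intro hu
        refine ⟨(m:ℝ)⁻¹ • u, ?_, ?_⟩
        · rw [hPeq]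
          simp only [Set.mem_iInter, Set.mem_setOf_eq] at hu ⊢
          intro i
          have hsum : ∑ j, ((m:ℝ)⁻¹ • u) j * (v i j : ℝ)
              = (m:ℝ)⁻¹ * ∑ j, u j * (v i j : ℝ) := by
            rw [Finset.mul_sum]
            refine Finset.sum_congr rfl fun j _ => ?_
            simp [mul_assoc]
          rw [hsum]
          rw [show (-1 : ℝ) = (m:ℝ)⁻¹ * (-(m:ℝ)) by field_simp]
          exact mul_le_mul_of_nonneg_left (hu i) (by positivity)
        · simp [smul_smul, mul_inv_cancel₀ (ne_of_gt hm')]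
  -- compute the interior
  have hint : interior (dilate n (k' + 1) P)
      = ⋂ i, {u : Fin n → ℝ | -((k' + 1 : ℕ):ℝ) < ∑ j, u j * (v i j : ℝ)} := by
    rw [hdil (k' + 1), interior_iInter_of_finite]
    exact Set.iInter_congr fun i => aux_interior_halfspace _ _ (hv i)
  rw [hint, hdil k']
  -- integer comparison on lattice points
  ext u
  simp only [latticePts, Set.mem_setOf_eq, Set.mem_iInter]
  constructor
  · rintro ⟨h1, h2⟩
    refine ⟨fun i => ?_, h2⟩
    choose z hz using h2
    have hZ : ∑ j, u j * (v i j : ℝ) = ((∑ j, z j * v i j : ℤ) : ℝ) := by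
      push_cast
      exact Finset.sum_congr rfl fun j _ => by rw [hz j]
    rw [hZ]
    have h3 := h1 i
    rw [hZ] at h3
    have : -((k' : ℤ)) ≤ ∑ j, z j * v i j := by
      have h4 : (-((k' + 1 : ℕ):ℤ) : ℝ) < ((∑ j, z j * v i j : ℤ) : ℝ) := by push_cast at h3 ⊢; linarith
      have h5 : -((k' + 1 : ℕ):ℤ) < ∑ j, z j * v i j := by exact_mod_cast h4
      omega
    calc -((k':ℕ):ℝ) = ((-(k':ℤ) : ℤ) : ℝ) := by push_cast; ring
      _ ≤ _ := by exact_mod_cast this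
  · rintro ⟨h1, h2⟩
    refine ⟨fun i => ?_, h2⟩
    choose z hz using h2
    have hZ : ∑ j, u j * (v i j : ℝ) = ((∑ j, z j * v i j : ℤ) : ℝ) := by
      push_cast
      exact Finset.sum_congr rfl fun j _ => by rw [hz j]
    rw [hZ]
    have h3 := h1 i
    rw [hZ] at h3
    have h5 : -((k' : ℤ)) ≤ ∑ j, z j * v i j := by
      have h4 : (-((k' : ℕ):ℤ) : ℝ) ≤ ((∑ j, z j * v i j : ℤ) : ℝ) := by push_cast at h3 ⊢; linarith
      exact_mod_cast h4
    have h6 : -((k' + 1 : ℕ):ℤ) < ∑ j, z j * v i j := by omega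
    calc -((k'+1:ℕ):ℝ) = ((-((k'+1:ℕ)) : ℤ) : ℝ) := by push_cast; ring
      _ < _ := by exact_mod_cast h6
end
end

section
/- Let P ⊂ ℝ^n be a reflexive lattice polytope. Suppose E ∈ ℝ[X] satisfies E(k) = #(kP ∩ ℤ^n) for every positive integer k, E(0) = 1, and the Ehrhart–Macdonald reciprocity E(−k) = (−1)^n · #(int(kP) ∩ ℤ^n) for every positive integer k. Then E(−k) = (−1)^n · E(k−1) for every positive integer k. -/
open scoped BigOperators
open MeasureTheory Polynomial Filter

noncomputable section

/-! Write `tP = {u | ⟨u, v i⟩ ≥ -t ∀ i}`. For a reflexive polytope, `kP` is this polyhedron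
for every `k ≥ 0` (for `k = 0` because `P` is bounded), and the interior of `kP` is cut out
by the strict inequalities `⟨u, v i⟩ > -k`. At a lattice point `⟨u, v i⟩` is an integer, so
these strict inequalities say `⟨u, v i⟩ ≥ -(k - 1)`: the interior lattice points of `kP` are
exactly the lattice points of `(k - 1)P`, and reciprocity turns this into the identity. -/

open Bornology
open scoped Pointwise

theorem dilate_zero {n : ℕ} {S : Set (Fin n → ℝ)} (hS : S.Nonempty) : dilate n 0 S = {0} := by
  rw [dilate, Nat.cast_zero]
  exact Set.zero_smul_set hS

section LevelPolyhedron

variable {n : ℕ} {ι : Type*} (a : ι → Fin n → ℝ)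

def levelPolyhedron (t : ℝ) : Set (Fin n → ℝ) := {u | ∀ i, -t ≤ u ⬝ᵥ a i}

theorem zero_mem_levelPolyhedron {t : ℝ} (ht : 0 ≤ t) : (0 : Fin n → ℝ) ∈ levelPolyhedron a t :=
  fun i => by simpa using ht

theorem smul_levelPolyhedron_one {t : ℝ} (ht : 0 < t) :
    t • levelPolyhedron a 1 = levelPolyhedron a t := by
  ext u
  simp only [Set.mem_smul_set_iff_inv_smul_mem₀ ht.ne', levelPolyhedron, Set.mem_ofPred_eq,
    smul_dotProduct, smul_eq_mul]
  refine forall_congr' fun i => ?_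
  rw [← mul_le_mul_iff_of_pos_left ht, mul_inv_cancel_left₀ ht.ne']
  simp

theorem levelPolyhedron_zero (hb : IsBounded (levelPolyhedron a 1)) :
    levelPolyhedron a 0 = {0} := by
  refine Set.eq_singleton_iff_unique_mem.2 ⟨zero_mem_levelPolyhedron a le_rfl, fun u hu => ?_⟩
  have hray : ∀ s : ℝ, 0 ≤ s → s • u ∈ levelPolyhedron a 1 := fun s hs i => by
    rw [smul_dotProduct, smul_eq_mul]
    nlinarith [hu i]
  obtain ⟨C, hC⟩ := hb.exists_norm_le
  by_contra hu0
  have hnorm : 0 < ‖u‖ := norm_pos_iff.2 hu0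
  have hC0 : 0 ≤ C := (norm_nonneg _).trans (hC 0 (zero_mem_levelPolyhedron a zero_le_one))
  have := hC _ (hray ((C + 1) / ‖u‖) (by positivity))
  rw [norm_smul, Real.norm_of_nonneg (by positivity), div_mul_cancel₀ _ hnorm.ne'] at this
  linarith

theorem dilate_levelPolyhedron_one (hb : IsBounded (levelPolyhedron a 1)) (k : ℕ) :
    dilate n k (levelPolyhedron a 1) = levelPolyhedron a k := by
  rcases k.eq_zero_or_pos with rfl | hk
  · rw [Nat.cast_zero, levelPolyhedron_zero a hb]
    exact dilate_zero ⟨0, zero_mem_levelPolyhedron a zero_le_one⟩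
  · exact smul_levelPolyhedron_one a (Nat.cast_pos.2 hk)

theorem isOpenMap_dotProduct {b : Fin n → ℝ} (hb : b ≠ 0) : IsOpenMap (· ⬝ᵥ b) := by
  have hbb : b ⬝ᵥ b ≠ 0 := fun h => hb (dotProduct_self_eq_zero.1 h)
  refine IsOpenMap.of_sections fun y =>
    ⟨fun s => y + ((s - y ⬝ᵥ b) / (b ⬝ᵥ b)) • b, by fun_prop, by simp, fun s => ?_⟩
  simp only [add_dotProduct, smul_dotProduct, smul_eq_mul, div_mul_cancel₀ _ hbb]
  ring

theorem interior_levelPolyhedron [Finite ι] (ha : ∀ i, a i ≠ 0) (t : ℝ) :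
    interior (levelPolyhedron a t) = {u | ∀ i, -t < u ⬝ᵥ a i} := by
  have : levelPolyhedron a t = ⋂ i, (· ⬝ᵥ a i) ⁻¹' Set.Ici (-t) := by
    ext u
    simp [levelPolyhedron]
  rw [this, interior_iInter_of_finite]
  simp_rw [← (isOpenMap_dotProduct (ha _)).preimage_interior_eq_interior_preimage
    (by fun_prop), interior_Ici]
  ext u
  simp

end LevelPolyhedron

theorem latticePts_singleton_zero {n : ℕ} : latticePts n {0} = {0} := by
  ext u
  simpa [latticePts, isLatticePoint] using fun hu : u = 0 => fun i => ⟨0, by simp [hu]⟩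

theorem isLatticePoint.exists_dotProduct_eq_intCast {n : ℕ} {u : Fin n → ℝ}
    (hu : isLatticePoint n u) (w : Fin n → ℤ) : ∃ z : ℤ, u ⬝ᵥ (fun j => (w j : ℝ)) = z := by
  choose z hz using hu
  exact ⟨z ⬝ᵥ w, by simp [dotProduct, hz]⟩

theorem latticePts_setOf_lt_eq_levelPolyhedron {n : ℕ} {ι : Type*} (v : ι → Fin n → ℤ) (k : ℕ) :
    latticePts n {u | ∀ i, -((k : ℝ) + 1) < u ⬝ᵥ (fun j => (v i j : ℝ))}
      = latticePts n (levelPolyhedron (fun i j => (v i j : ℝ)) k) := by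
  ext u
  simp only [latticePts, levelPolyhedron, Set.mem_ofPred_eq]
  refine and_congr_left fun hu => forall_congr' fun i => ?_
  obtain ⟨z, hz⟩ := hu.exists_dotProduct_eq_intCast (v i)
  rw [hz]
  constructor <;> intro h
  · have : -((k : ℤ) + 1) < z := by exact_mod_cast h
    exact_mod_cast (show -(k : ℤ) ≤ z by omega)
  · linarith

theorem IsLatticePolytope.isBounded {n : ℕ} {P : Set (Fin n → ℝ)} (hP : IsLatticePolytope n P) :
    IsBounded P := by
  obtain ⟨V, -, -, rfl⟩ := hP
  exact (V.finite_toSet.isCompact_convexHull ℝ).isBounded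

namespace IsReflexive

variable {n d : ℕ} {v : Fin d → Fin n → ℤ} {P : Set (Fin n → ℝ)}

theorem eq_levelPolyhedron (h : IsReflexive n d v P) :
    P = levelPolyhedron (fun i j => (v i j : ℝ)) 1 := by
  rw [h.2]
  ext u
  simp [levelPolyhedron, dotProduct]

theorem zero_mem (h : IsReflexive n d v P) : (0 : Fin n → ℝ) ∈ P :=
  h.eq_levelPolyhedron ▸ zero_mem_levelPolyhedron _ zero_le_one

theorem intCast_ne_zero (h : IsReflexive n d v P) (i : Fin d) : (fun j => (v i j : ℝ)) ≠ 0 := by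
  intro hi
  have hv : v i = 0 := funext fun j => by simpa using congrFun hi j
  have hgcd : Finset.univ.gcd (v i) = 0 := Finset.gcd_eq_zero_iff.2 fun j _ => by simp [hv]
  exact zero_ne_one (hgcd.symm.trans (h.1 i))

end IsReflexive

theorem latticePts_interior_dilate_succ {n d : ℕ} {v : Fin d → Fin n → ℤ} {P : Set (Fin n → ℝ)}
    (hP : IsLatticePolytope n P) (href : IsReflexive n d v P) (k : ℕ) :
    latticePts n (interior (dilate n (k + 1) P)) = latticePts n (dilate n k P) := by
  have hb := hP.isBounded
  rw [href.eq_levelPolyhedron] at hb ⊢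
  rw [dilate_levelPolyhedron_one _ hb, dilate_levelPolyhedron_one _ hb,
    interior_levelPolyhedron _ href.intCast_ne_zero, Nat.cast_succ]
  exact latticePts_setOf_lt_eq_levelPolyhedron v k

theorem ncard_latticePts_dilate_zero {n : ℕ} {P : Set (Fin n → ℝ)} (hP : P.Nonempty) :
    (latticePts n (dilate n 0 P)).ncard = 1 := by
  rw [dilate_zero hP, latticePts_singleton_zero, Set.ncard_singleton]

theorem reflexive_reciprocity_general
    (n d : ℕ) (v : Fin d → Fin n → ℤ) (P : Set (Fin n → ℝ))
    (hP : IsLatticePolytope n P)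
    (href : IsReflexive n d v P)
    (E : Polynomial ℝ) (hE0 : E.eval 0 = 1)
    (hE : ∀ k : ℕ, 0 < k → E.eval (k : ℝ) = ((latticePts n (dilate n k P)).ncard : ℝ))
    (hrec : ∀ k : ℕ, 0 < k →
      E.eval (-(k : ℝ))
        = (-1 : ℝ)^n * ((latticePts n (interior (dilate n k P))).ncard : ℝ)) :
    ∀ k : ℕ, 0 < k → E.eval (-(k : ℝ)) = (-1 : ℝ)^n * E.eval ((k : ℝ) - 1) := by
  have hE' : ∀ m : ℕ, E.eval (m : ℝ) = ((latticePts n (dilate n m P)).ncard : ℝ)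
    | 0 => by rw [ncard_latticePts_dilate_zero ⟨0, href.zero_mem⟩, Nat.cast_zero, hE0, Nat.cast_one]
    | m + 1 => hE _ m.succ_pos
  intro k hk
  obtain ⟨m, rfl⟩ := Nat.exists_eq_succ_of_ne_zero hk.ne'
  rw [hrec _ hk, latticePts_interior_dilate_succ hP href, ← hE' m, Nat.cast_succ,
    add_sub_cancel_right]

/-- for a reflexive lattice polytope, the Ehrhart polynomial satisfies
`E(−k) = (−1)^n · E(k−1)` for every positive integer `k`, given Ehrhart–Macdonald
reciprocity as a hypothesis. -/
theorem reflexive_reciprocity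
    (n d : ℕ) (v : Fin d → Fin n → ℤ) (P : Set (Fin n → ℝ))
    (hP : IsLatticePolytope n P) (hdim : IsFullDim n P)
    (href : IsReflexive n d v P)
    (E : Polynomial ℝ) (hE0 : E.eval 0 = 1)
    (hE : ∀ k : ℕ, 0 < k → E.eval (k : ℝ) = ((latticePts n (dilate n k P)).ncard : ℝ))
    (hrec : ∀ k : ℕ, 0 < k →
      E.eval (-(k : ℝ))
        = (-1 : ℝ)^n * ((latticePts n (interior (dilate n k P))).ncard : ℝ)) :
    ∀ k : ℕ, 0 < k → E.eval (-(k : ℝ)) = (-1 : ℝ)^n * E.eval ((k : ℝ) - 1) :=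
  reflexive_reciprocity_general n d v P hP href E hE0 hE hrec
end
end

section
/- Let P = ⋂_{i=1}^d {u ∈ ℝ^n : ⟨u, v_i⟩ ≥ −b_i} be an n-dimensional lattice polytope with v_i ∈ ℤ^n and b_i ∈ ℤ. Suppose E ∈ ℝ[X] has degree at most n and satisfies E(k) = #(kP ∩ ℤ^n) > 0 for all positive integers k, and suppose for each i ∈ {1,…,d} there is a polynomial Q_i ∈ ℝ[X] of degree at most n with ⟨Bc_k(P), v_i⟩ + b_i = Q_i(k)/E(k) for all positive integers k. Then there exist an index i_0 ∈ {1,…,d} and K ∈ ℕ such that for every integer k ≥ K, max_{1≤i≤d}(⟨Bc_k(P), v_i⟩ + b_i) = Q_{i_0}(k)/E(k); in particular, for sufficiently large k the quantity max_{1≤i≤d}(⟨Bc_k(P), v_i⟩ + b_i) is a rational function of k whose numerator and denominator are polynomials of degree at most n. -/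
open scoped BigOperators
open MeasureTheory Polynomial Filter

noncomputable section

/-- `max_{1 ≤ i ≤ d} (⟨x, v_i⟩ + b_i)`, the reciprocal of the stability threshold
evaluated at the point `x`. -/
def pairingMaxB (n d : ℕ) (hd : 0 < d) (v : Fin d → Fin n → ℤ) (b : Fin d → ℤ)
    (x : Fin n → ℝ) : ℝ :=
  Finset.univ.sup' ⟨⟨0, hd⟩, Finset.mem_univ _⟩
    (fun i => (∑ j, x j * (v i j : ℝ)) + (b i : ℝ))


lemma poly_eventually_le_or (p q : Polynomial ℝ) :
    (∀ᶠ x : ℝ in atTop, p.eval x ≤ q.eval x) ∨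
    (∀ᶠ x : ℝ in atTop, q.eval x ≤ p.eval x) := by
  rcases le_or_gt (q - p).degree 0 with h | h
  · obtain ⟨c, hc⟩ : ∃ c, q - p = Polynomial.C c := ⟨_, Polynomial.eq_C_of_degree_le_zero h⟩
    rcases le_or_gt 0 c with hc0 | hc0
    · left
      filter_upwards with x
      have := congrArg (Polynomial.eval x) hc
      simp only [Polynomial.eval_sub, Polynomial.eval_C] at this
      linarith
    · right
      filter_upwards with x
      have := congrArg (Polynomial.eval x) hc
      simp only [Polynomial.eval_sub, Polynomial.eval_C] at this
      linarith
  · rcases le_or_gt 0 (q - p).leadingCoeff with hl | hl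
    · left
      have := (q - p).tendsto_atTop_of_leadingCoeff_nonneg h hl
      filter_upwards [this.eventually_ge_atTop 0] with x hx
      simp only [Polynomial.eval_sub] at hx
      linarith
    · right
      have := (q - p).tendsto_atBot_of_leadingCoeff_nonpos h hl.le
      filter_upwards [this.eventually_le_atBot 0] with x hx
      simp only [Polynomial.eval_sub] at hx
      linarith

lemma exists_dominant (d : ℕ) (Q : Fin d → Polynomial ℝ) (s : Finset (Fin d)) (hs : s.Nonempty) :
    ∃ i₀ ∈ s, ∀ j ∈ s, ∀ᶠ x : ℝ in atTop, (Q j).eval x ≤ (Q i₀).eval x := by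
  induction hs using Finset.Nonempty.cons_induction with
  | singleton a => exact ⟨a, by simp, by simp⟩
  | cons a s ha hs ih =>
    obtain ⟨i₀, hi₀, hmax⟩ := ih
    rcases poly_eventually_le_or (Q a) (Q i₀) with h | h
    · refine ⟨i₀, Finset.mem_cons_of_mem hi₀, fun j hj => ?_⟩
      rcases Finset.mem_cons.1 hj with rfl | hj
      · exact h
      · exact hmax j hj
    · refine ⟨a, Finset.mem_cons_self a s, fun j hj => ?_⟩
      rcases Finset.mem_cons.1 hj with rfl | hj
      · filter_upwards with x; exact le_rfl
      · filter_upwards [hmax j hj, h] with x h1 h2; linarith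

/-- for sufficiently large `k`, `max_i (⟨Bc_k(P), v_i⟩ + b_i)` is a single
rational function `Q_{i₀}(k)/E(k)` with numerator and denominator of degree at most `n`. -/
theorem delta_k_eventually_rational
    (n d : ℕ) (hd : 0 < d) (v : Fin d → Fin n → ℤ) (b : Fin d → ℤ)
    (P : Set (Fin n → ℝ))
    (hP : IsLatticePolytope n P) (hdim : IsFullDim n P)
    (hrep : P = ⋂ i, {u : Fin n → ℝ | -(b i : ℝ) ≤ ∑ j, u j * (v i j : ℝ)})
    (E : Polynomial ℝ) (hEdeg : E.natDegree ≤ n)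
    (hE : ∀ k : ℕ, 0 < k → E.eval (k : ℝ) = ((latticePts n (dilate n k P)).ncard : ℝ))
    (hEpos : ∀ k : ℕ, 0 < k → 0 < E.eval (k : ℝ))
    (Q : Fin d → Polynomial ℝ) (hQdeg : ∀ i, (Q i).natDegree ≤ n)
    (hQ : ∀ i : Fin d, ∀ k : ℕ, 0 < k →
      (∑ j, Bck n k P j * (v i j : ℝ)) + (b i : ℝ)
        = (Q i).eval (k : ℝ) / E.eval (k : ℝ)) :
    ∃ i₀ : Fin d, ∃ K : ℕ, ∀ k : ℕ, K ≤ k →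
      pairingMaxB n d hd v b (Bck n k P) = (Q i₀).eval (k : ℝ) / E.eval (k : ℝ) := by
  obtain ⟨i₀, -, hmax⟩ := exists_dominant d Q Finset.univ ⟨⟨0, hd⟩, Finset.mem_univ _⟩
  have hev : ∀ᶠ x : ℝ in atTop, ∀ j : Fin d, (Q j).eval x ≤ (Q i₀).eval x :=
    eventually_all.2 fun j => hmax j (Finset.mem_univ j)
  obtain ⟨M, hM⟩ := eventually_atTop.1 hev
  refine ⟨i₀, max 1 ⌈M⌉₊, fun k hk => ?_⟩
  have hk1 : 0 < k := lt_of_lt_of_le (by norm_num) (le_trans (le_max_left _ _) hk)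
  have hkM : M ≤ (k : ℝ) := by
    refine le_trans (Nat.le_ceil M) ?_
    exact_mod_cast le_trans (le_max_right 1 ⌈M⌉₊) hk
  unfold pairingMaxB
  apply le_antisymm
  · apply Finset.sup'_le
    intro i _
    rw [hQ i k hk1]
    exact div_le_div_of_nonneg_right (hM (k : ℝ) hkM i) (hEpos k hk1).le
  · rw [← hQ i₀ k hk1]
    exact Finset.le_sup' (fun i => (∑ j, Bck n k P j * (v i j : ℝ)) + (b i : ℝ)) (Finset.mem_univ i₀)
end
end
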